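/- Let N = [0,1] \ ⋃_{n∈ℕ} U_{2n} be the Guthrie–Nymann Cantorval (where U_n is the union of open middle-third intervals removed at step n of the ternary Cantor construction). Then 25/54 ∈ N, but there is no y ∈ N with |25/54 − y| = 2/9. Consequently 2/9 is not in the center of distances of N. -/
import Mathlib


def cantorIter : ℕ → Set ℝ
  | 0 => Set.Icc 0 1
  | n + 1 => (fun x => x / 3) '' cantorIter n ∪ (fun x => x / 3 + 2 / 3) '' cantorIter n

def removedAtStep (n : ℕ) : Set ℝ := cantorIter n \ cantorIter (n + 1)

/-- The Guthrie–Nymann Cantorval `N = [0,1] \ ⋃_{n ≥ 1} U_{2n}`. -/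
def GNCantorval : Set ℝ :=
  Set.Icc 0 1 \ ⋃ n : ℕ, removedAtStep (2 * n + 1)

/-- The center of distances of a set of reals. -/
def centerOfDistances (X : Set ℝ) : Set ℝ :=
  {α | 0 ≤ α ∧ ∀ x ∈ X, ∃ y ∈ X, |x - y| = α}

lemma cantorIter_mem_succ_iff (n : ℕ) (x : ℝ) :
    x ∈ cantorIter (n + 1) ↔ 3 * x ∈ cantorIter n ∨ 3 * x - 2 ∈ cantorIter n := by
  show x ∈ _ ∪ _ ↔ _
  simp only [Set.mem_union, Set.mem_image]
  constructor
  · rintro (⟨y, hy, rfl⟩ | ⟨y, hy, rfl⟩)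
    · left; convert hy using 1; ring
    · right; convert hy using 1; ring
  · rintro (h | h)
    · exact Or.inl ⟨3 * x, h, by ring⟩
    · exact Or.inr ⟨3 * x - 2, h, by ring⟩

lemma cantorIter_subset_Icc : ∀ n, cantorIter n ⊆ Set.Icc 0 1 := by
  intro n
  induction n with
  | zero => exact subset_rfl
  | succ m ih =>
    intro x hx
    rw [cantorIter_mem_succ_iff] at hx
    rcases hx with h | h
    · have := ih h
      exact ⟨by linarith [this.1], by linarith [this.2]⟩
    · have := ih h
      exact ⟨by linarith [this.1], by linarith [this.2]⟩

lemma cantorIter_succ_subset (n : ℕ) : cantorIter (n + 1) ⊆ cantorIter n := by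
  induction n with
  | zero => exact cantorIter_subset_Icc 1
  | succ m ih =>
    intro x hx
    rw [cantorIter_mem_succ_iff] at hx ⊢
    rcases hx with h | h
    · exact Or.inl (ih h)
    · exact Or.inr (ih h)

lemma cantorIter_subset_one (n : ℕ) : cantorIter (n + 1) ⊆ cantorIter 1 := by
  induction n with
  | zero => exact subset_rfl
  | succ m ih => exact (cantorIter_succ_subset (m + 1)).trans ih

lemma not_mem_C1 (x : ℝ) (h1 : (1:ℝ)/3 < x) (h2 : x < 2/3) : x ∉ cantorIter 1 := by
  rw [cantorIter_mem_succ_iff]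
  rintro (h | h)
  · have := (cantorIter_subset_Icc 0 h).2; linarith
  · have := (cantorIter_subset_Icc 0 h).1; linarith

lemma half_not_mem_C1 : (1/2 : ℝ) ∉ cantorIter 1 :=
  not_mem_C1 _ (by norm_num) (by norm_num)

lemma mem13 : (13/54 : ℝ) ∈ removedAtStep 3 := by
  constructor
  · -- 13/54 ∈ cantorIter 3
    rw [cantorIter_mem_succ_iff]
    left
    rw [show (3:ℝ) * (13/54) = 13/18 by norm_num, cantorIter_mem_succ_iff]
    right
    rw [show (3:ℝ) * (13/18) - 2 = 1/6 by norm_num, cantorIter_mem_succ_iff]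
    left
    rw [show (3:ℝ) * (1/6) = 1/2 by norm_num]
    exact ⟨by norm_num, by norm_num⟩
  · -- 13/54 ∉ cantorIter 4
    rw [cantorIter_mem_succ_iff]
    rintro (h | h)
    · rw [show (3:ℝ) * (13/54) = 13/18 by norm_num, cantorIter_mem_succ_iff] at h
      rcases h with h | h
      · have := (cantorIter_subset_Icc 2 h).2; norm_num at this
      · rw [show (3:ℝ) * (13/18) - 2 = 1/6 by norm_num, cantorIter_mem_succ_iff] at h
        rcases h with h | h
        · rw [show (3:ℝ) * (1/6) = 1/2 by norm_num] at h
          exact half_not_mem_C1 h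
        · have := (cantorIter_subset_Icc 1 h).1; norm_num at this
    · have := (cantorIter_subset_Icc 3 h).1; norm_num at this

lemma mem37 : (37/54 : ℝ) ∈ removedAtStep 3 := by
  constructor
  · rw [cantorIter_mem_succ_iff]
    right
    rw [show (3:ℝ) * (37/54) - 2 = 1/18 by norm_num, cantorIter_mem_succ_iff]
    left
    rw [show (3:ℝ) * (1/18) = 1/6 by norm_num, cantorIter_mem_succ_iff]
    left
    rw [show (3:ℝ) * (1/6) = 1/2 by norm_num]
    exact ⟨by norm_num, by norm_num⟩
  · rw [cantorIter_mem_succ_iff]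
    rintro (h | h)
    · have := (cantorIter_subset_Icc 3 h).2; norm_num at this
    · rw [show (3:ℝ) * (37/54) - 2 = 1/18 by norm_num, cantorIter_mem_succ_iff] at h
      rcases h with h | h
      · rw [show (3:ℝ) * (1/18) = 1/6 by norm_num, cantorIter_mem_succ_iff] at h
        rcases h with h | h
        · rw [show (3:ℝ) * (1/6) = 1/2 by norm_num] at h
          exact half_not_mem_C1 h
        · have := (cantorIter_subset_Icc 1 h).1; norm_num at this
      · have := (cantorIter_subset_Icc 2 h).1; norm_num at this

lemma not_mem_GN_of_removed3 {x : ℝ} (h : x ∈ removedAtStep 3) : x ∉ GNCantorval := by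
  intro hx
  exact hx.2 (Set.mem_iUnion.mpr ⟨1, by simpa using h⟩)

theorem stmt_14 :
    (25 / 54 : ℝ) ∈ GNCantorval ∧
      (¬ ∃ y ∈ GNCantorval, |25 / 54 - y| = (2 / 9 : ℝ)) ∧
      (2 / 9 : ℝ) ∉ centerOfDistances GNCantorval := by
  have h25 : (25/54 : ℝ) ∉ cantorIter 1 :=
    not_mem_C1 _ (by norm_num) (by norm_num)
  have hmem : (25 / 54 : ℝ) ∈ GNCantorval := by
    constructor
    · exact ⟨by norm_num, by norm_num⟩
    · intro h
      rcases Set.mem_iUnion.mp h with ⟨n, hn⟩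
      exact h25 (cantorIter_subset_one (2 * n) hn.1)
  have hno : ¬ ∃ y ∈ GNCantorval, |25 / 54 - y| = (2 / 9 : ℝ) := by
    rintro ⟨y, hy, habs⟩
    rcases abs_eq (by norm_num : (0:ℝ) ≤ 2/9) |>.mp habs with h | h
    · have : y = 13/54 := by linarith
      subst this
      exact not_mem_GN_of_removed3 mem13 hy
    · have : y = 37/54 := by linarith
      subst this
      exact not_mem_GN_of_removed3 mem37 hy
  exact ⟨hmem, hno, fun hc => hno (hc.2 _ hmem)⟩
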